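/- Let p2, p3, p4 ∈ ℂ[v,y] ⊂ S, q2, q3, q4 ∈ ℂ[v] ⊂ S and k2, k3, k4 ∈ ℂ. Set E2 = (−y² + p2·t)∂_y + q2·t·∂_v + k2·t·∂_t, E3 = p3·t·∂_y + (1 + q3·t)∂_v + k3·t·∂_t and E4 = (−v·y² + p4·t)∂_y + q4·t·∂_v + k4·t·∂_t. If [E3,E4] ≡ E2 (mod t²), then k2 = 0 and ∂_v q4 + k3·q4 − k4·q3 = q2 in ℂ[v]. -/

import Mathlib

open MvPolynomial

noncomputable section

/-- `S = ℂ[v,y,t]` with `v = X 0`, `y = X 1`, `t = X 2`. -/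
abbrev S : Type := MvPolynomial (Fin 3) ℂ

/-- The variable `v`. -/ def V : S := X 0
/-- The variable `y`. -/ def Y : S := X 1
/-- The variable `t`. -/ def T : S := X 2

/-- The derivation `f ∂_y + g ∂_v + h ∂_t` of `S = ℂ[v,y,t]`, determined by
`y ↦ f`, `v ↦ g`, `t ↦ h`. -/
def der (f g h : S) : Derivation ℂ S S :=
  MvPolynomial.mkDerivation ℂ ![g, f, h]

/-- The inclusion `ℂ[v,y] ⊂ S` (where in `ℂ[v,y]` the variable `X 0` is `v`
and `X 1` is `y`). -/
def ι2 : MvPolynomial (Fin 2) ℂ →ₐ[ℂ] S := aeval ![V, Y]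

/-- The inclusion `ℂ[v] ⊂ S`. -/
def ι1 : Polynomial ℂ →ₐ[ℂ] S := Polynomial.aeval V

/-- `D ≡ D' (mod t²)`: the difference sends `y`, `v`, `t` into the ideal `(t²)`. -/
def ModT2 (D D' : Derivation ℂ S S) : Prop :=
  ∀ i : Fin 3, (D - D') (X i) ∈ Ideal.span {T ^ 2}

/-!
Both the `v`- and `t`-components of `⁅E3, E4⁆ - E2` are multiples of `t`. Since the difference
lies in `(t²)`, the cofactors vanish modulo `t`, and setting `y = t = 0` in them gives the
two identities: the `t`-component is `-k2 t` because `E3` and `E4` both scale `t`, and the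
`v`-cofactor reduces to `q4' + k3 q4 - k4 q3 - q2`.
-/

lemma Derivation.commutator_apply_eq_zero_of_apply_eq_smul {R A : Type*} [CommRing R]
    [CommRing A] [Algebra R A] {D D' : Derivation R A A} {x : A} {a b : R}
    (hD : D x = a • x) (hD' : D' x = b • x) : ⁅D, D'⁆ x = 0 := by
  rw [Derivation.commutator_apply, hD, hD', map_smul, map_smul, hD, hD', smul_comm, sub_self]

lemma mem_span_of_mul_mem_span_sq {R : Type*} [CommRing R] [IsDomain R] {a b : R}
    (hb : b ≠ 0) (h : a * b ∈ Ideal.span {b ^ 2}) : a ∈ Ideal.span {b} := by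
  obtain ⟨c, hc⟩ := Ideal.mem_span_singleton'.mp h
  refine Ideal.mem_span_singleton'.mpr ⟨c, mul_right_cancel₀ hb ?_⟩
  rw [← hc]
  ring

lemma der_V (f g h : S) : der f g h V = g := by
  simp [der, V, mkDerivation_X]

lemma der_T (f g h : S) : der f g h T = h := by
  simp [der, T, mkDerivation_X]

lemma Derivation.apply_ι1 (D : Derivation ℂ S S) (q : Polynomial ℂ) :
    D (ι1 q) = ι1 (Polynomial.derivative q) * D V := by
  rw [ι1, Derivation.map_aeval, smul_eq_mul]

lemma Derivation.apply_ι1_mul_T (D : Derivation ℂ S S) (q : Polynomial ℂ) :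
    D (ι1 q * T) = ι1 (Polynomial.derivative q) * D V * T + ι1 q * D T := by
  rw [Derivation.leibniz, D.apply_ι1, smul_eq_mul, smul_eq_mul]
  ring

def evalYT0 : S →ₐ[ℂ] Polynomial ℂ := aeval ![Polynomial.X, 0, 0]

lemma evalYT0_T : evalYT0 T = 0 := by
  simp [evalYT0, T]

lemma evalYT0_C (a : ℂ) : evalYT0 (C a) = Polynomial.C a := by
  simp [evalYT0, Polynomial.algebraMap_eq]

lemma evalYT0_ι1 (q : Polynomial ℂ) : evalYT0 (ι1 q) = q := by
  rw [ι1, ← Polynomial.aeval_algHom_apply,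
    show evalYT0 V = Polynomial.X by simp [evalYT0, V], Polynomial.aeval_X_left_apply]

lemma evalYT0_eq_zero_of_mul_T_mem {A : S} (hA : A * T ∈ Ideal.span {T ^ 2}) :
    evalYT0 A = 0 := by
  obtain ⟨c, rfl⟩ := Ideal.mem_span_singleton'.mp (mem_span_of_mul_mem_span_sq (X_ne_zero 2) hA)
  rw [map_mul, evalYT0_T, mul_zero]

theorem bracket_E3_E4 (p2 p3 p4 : MvPolynomial (Fin 2) ℂ) (q2 q3 q4 : Polynomial ℂ)
    (k2 k3 k4 : ℂ) (E2 E3 E4 : Derivation ℂ S S)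
    (hE2 : E2 = der (-Y ^ 2 + ι2 p2 * T) (ι1 q2 * T) (C k2 * T))
    (hE3 : E3 = der (ι2 p3 * T) (1 + ι1 q3 * T) (C k3 * T))
    (hE4 : E4 = der (-V * Y ^ 2 + ι2 p4 * T) (ι1 q4 * T) (C k4 * T))
    (h : ModT2 ⁅E3, E4⁆ E2) :
    k2 = 0 ∧
      Polynomial.derivative q4 + Polynomial.C k3 * q4 - Polynomial.C k4 * q3 = q2 := by
  have e3V : E3 V = 1 + ι1 q3 * T := by rw [hE3, der_V]
  have e4V : E4 V = ι1 q4 * T := by rw [hE4, der_V]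
  have e3T : E3 T = k3 • T := by rw [hE3, der_T, smul_eq_C_mul]
  have e4T : E4 T = k4 • T := by rw [hE4, der_T, smul_eq_C_mul]
  have compT : (⁅E3, E4⁆ - E2) T = -C k2 * T := by
    rw [Derivation.sub_apply, Derivation.commutator_apply_eq_zero_of_apply_eq_smul e3T e4T,
      hE2, der_T]
    ring
  have compV : (⁅E3, E4⁆ - E2) V = (ι1 (Polynomial.derivative q4) * (1 + ι1 q3 * T)
      + ι1 q4 * C k3 - ι1 (Polynomial.derivative q3) * ι1 q4 * T - ι1 q3 * C k4 - ι1 q2) * T := by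
    rw [Derivation.sub_apply, Derivation.commutator_apply, e4V, e3V, E3.apply_ι1_mul_T, map_add,
      Derivation.map_one_eq_zero, E4.apply_ι1_mul_T, e3V, e4V, e3T, e4T, hE2, der_V,
      smul_eq_C_mul, smul_eq_C_mul]
    ring
  have hk2 := evalYT0_eq_zero_of_mul_T_mem (compT ▸ h 2)
  have hq := evalYT0_eq_zero_of_mul_T_mem (compV ▸ h 0)
  rw [map_neg, evalYT0_C, neg_eq_zero, Polynomial.C_eq_zero] at hk2
  simp only [map_sub, map_add, map_mul, map_one, evalYT0_ι1, evalYT0_T, evalYT0_C, mul_zero,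
    add_zero, mul_one] at hq
  exact ⟨hk2, by linear_combination hq⟩

end
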